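/- arXiv:1609.02698 — 2 statements merged into one kernel-verified Lean document; each statement's English description precedes it below -/
import Mathlib

section
/- Discrete Noether theorem without change of time (T = ℤ): Let L : ℤ × ℝ^d × ℝ^d → ℝ be a Lagrangian, and define Δx(n) = x(n+1) − x(n). Suppose x : ℤ → ℝ^d satisfies the discrete Euler–Lagrange equation ∂L/∂v(n,x(n),Δx(n)) − ∂L/∂v(n−1,x(n−1),Δx(n−1)) = ∂L/∂x(n,x(n),Δx(n)) for all n, and suppose the infinitesimal invariance identity ⟨∂L/∂x(n,x(n),Δx(n)), ξ(x(n))⟩ + ⟨∂L/∂v(n,x(n),Δx(n)), ξ(x(n+1)) − ξ(x(n))⟩ = 0 holds for all n. Then the quantity I(n) = ⟨ξ(x(n+1)), ∂L/∂v(n,x(n),Δx(n))⟩ is independent of n. -/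
/-!
Write `p n = ∂L/∂v(n, x(n), Δx(n))` and `ζ n = ξ(x(n))`. The discrete Leibniz rule gives
`I(n) - I(n-1) = ⟨p n, ζ(n+1) - ζ n⟩ + ⟨ζ n, p n - p(n-1)⟩`; by the Euler–Lagrange equation the
second term is `⟨ζ n, ∂L/∂x(n, x(n), Δx(n))⟩`, so the invariance identity says exactly that this
difference vanishes.
-/

open scoped RealInnerProductSpace

section

variable {E : Type*} [NormedAddCommGroup E] [InnerProductSpace ℝ E]

theorem real_inner_sub_real_inner_eq (a b p q : E) :
    ⟪b, p⟫ - ⟪a, q⟫ = ⟪p, b - a⟫ + ⟪a, p - q⟫ := by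
  rw [inner_sub_right, inner_sub_right, real_inner_comm p b, real_inner_comm a p]
  ring

theorem real_inner_succ_eq_of_discrete_noether (ζ p q : ℤ → E)
    (hEL : ∀ n, p n - p (n - 1) = q n)
    (hinv : ∀ n, ⟪q n, ζ n⟫ + ⟪p n, ζ (n + 1) - ζ n⟫ = 0) (m n : ℤ) :
    ⟪ζ (m + 1), p m⟫ = ⟪ζ (n + 1), p n⟫ := by
  set I : ℤ → ℝ := fun k => ⟪ζ (k + 1), p k⟫
  have hper : Function.Periodic I 1 := by
    intro k
    have hdiff := real_inner_sub_real_inner_eq (ζ (k + 1)) (ζ (k + 1 + 1)) (p (k + 1)) (p k)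
    have hEL' : p (k + 1) - p k = q (k + 1) := by simpa using hEL (k + 1)
    rw [hEL', real_inner_comm (q (k + 1))] at hdiff
    simp only [I]
    linarith [hinv (k + 1)]
  simpa [I] using (hper.int_mul (n - m) m).symm

end

theorem discrete_noether_no_time_change_general
    {d : ℕ}
    (Lx Lv : ℤ → EuclideanSpace ℝ (Fin d) → EuclideanSpace ℝ (Fin d) →
      EuclideanSpace ℝ (Fin d))
    (ξ : EuclideanSpace ℝ (Fin d) → EuclideanSpace ℝ (Fin d))
    (x : ℤ → EuclideanSpace ℝ (Fin d))
    (hEL : ∀ n : ℤ,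
      Lv n (x n) (x (n + 1) - x n) - Lv (n - 1) (x (n - 1)) (x n - x (n - 1))
        = Lx n (x n) (x (n + 1) - x n))
    (hinv : ∀ n : ℤ,
      (inner ℝ (Lx n (x n) (x (n + 1) - x n)) (ξ (x n)) : ℝ)
        + (inner ℝ (Lv n (x n) (x (n + 1) - x n)) (ξ (x (n + 1)) - ξ (x n)) : ℝ) = 0) :
    ∀ m n : ℤ,
      (inner ℝ (ξ (x (m + 1))) (Lv m (x m) (x (m + 1) - x m)) : ℝ)
        = (inner ℝ (ξ (x (n + 1))) (Lv n (x n) (x (n + 1) - x n)) : ℝ) :=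
  real_inner_succ_eq_of_discrete_noether (fun n => ξ (x n))
    (fun n => Lv n (x n) (x (n + 1) - x n)) (fun n => Lx n (x n) (x (n + 1) - x n))
    (fun n => by simpa only [sub_add_cancel] using hEL n) hinv

/-- Discrete Noether theorem without change of time (T = ℤ). -/
theorem discrete_noether_no_time_change
    {d : ℕ} (L : ℤ → EuclideanSpace ℝ (Fin d) → EuclideanSpace ℝ (Fin d) → ℝ)
    (Lx Lv : ℤ → EuclideanSpace ℝ (Fin d) → EuclideanSpace ℝ (Fin d) →
      EuclideanSpace ℝ (Fin d))
    (hLx : ∀ n x v, HasGradientAt (fun y => L n y v) (Lx n x v) x)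
    (hLv : ∀ n x v, HasGradientAt (fun w => L n x w) (Lv n x v) v)
    (ξ : EuclideanSpace ℝ (Fin d) → EuclideanSpace ℝ (Fin d))
    (x : ℤ → EuclideanSpace ℝ (Fin d))
    (hEL : ∀ n : ℤ,
      Lv n (x n) (x (n + 1) - x n) - Lv (n - 1) (x (n - 1)) (x n - x (n - 1))
        = Lx n (x n) (x (n + 1) - x n))
    (hinv : ∀ n : ℤ,
      (inner ℝ (Lx n (x n) (x (n + 1) - x n)) (ξ (x n)) : ℝ)
        + (inner ℝ (Lv n (x n) (x (n + 1) - x n)) (ξ (x (n + 1)) - ξ (x n)) : ℝ) = 0) :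
    ∀ m n : ℤ,
      (inner ℝ (ξ (x (m + 1))) (Lv m (x m) (x (m + 1) - x m)) : ℝ)
        = (inner ℝ (ξ (x (n + 1))) (Lv n (x n) (x (n + 1) - x n)) : ℝ) :=
  discrete_noether_no_time_change_general Lx Lv ξ x hEL hinv
end

section
/- Discrete second Euler–Lagrange / Noether identity (T = ℤ with time transformations): Let L : ℤ × ℝ^d × ℝ^d → ℝ, Δx(n) = x(n+1) − x(n), and let x satisfy the discrete Euler–Lagrange equation ∇[∂L/∂v(n,x(n),Δx(n))] = ∂L/∂x(n,x(n),Δx(n)), where ∇f(n) = f(n) − f(n−1). Suppose the infinitesimal invariance identity ∂L/∂t·ζ(n) + ⟨∂L/∂x, ξ(x(n))⟩ + ⟨∂L/∂v, Δ[ξ∘x](n)⟩ + (L − ⟨∂L/∂v, Δx(n)⟩)·Δζ(n) = 0 holds (all evaluated at (n, x(n), Δx(n))). Then the function I(n) = ζ(n+1)·(L − ⟨∂L/∂v, Δx(n)⟩) + ⟨ξ(x(n+1)), ∂L/∂v⟩ + Σ_{k=a+1}^{n} ζ(k)·[ ∂L/∂t(k,x(k),Δx(k)) − ∇(L − ⟨∂L/∂v,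 Δx⟩)(k) ] satisfies ∇I(n) = 0 for all n > a, i.e. I is constant. -/
/-!
Write `p = ∂L/∂v` and `H = L - ⟪p, Δx⟫` along the motion. By the discrete product rule,
`∇(ζ∘σ · H) = ζ · ∇H + H · Δζ` and `∇⟪ξ∘x∘σ, p⟫ = ⟪∇p, ξ∘x⟫ + ⟪p, Δ(ξ∘x)⟫`. The Euler–Lagrange
equation replaces `∇p` by `∂L/∂x`, the `ζ · ∇H` terms cancel against the new summand of `I`, and
what remains of `∇I` is exactly the left-hand side of the invariance identity.
-/

open Finset

open scoped RealInnerProductSpace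

theorem Finset.sum_Icc_sub_sum_Icc_sub_one {M : Type*} [AddCommGroup M] (f : ℤ → M) {a n : ℤ}
    (h : a ≤ n) : ∑ k ∈ Icc a n, f k - ∑ k ∈ Icc a (n - 1), f k = f n := by
  rw [← insert_Icc_sub_one_right_eq_Icc h, sum_insert (by simp), add_sub_cancel_right]

theorem noether_charge_sub_eq_zero {E : Type*} [NormedAddCommGroup E] [InnerProductSpace ℝ E]
    (H Λ ζ : ℤ → ℝ) (p f q : ℤ → E) (a : ℤ)
    (hEL : ∀ n, p n - p (n - 1) = f n)
    (hinv : ∀ n, Λ n * ζ n + ⟪f n, q n⟫ + ⟪p n, q (n + 1) - q n⟫ + H n * (ζ (n + 1) - ζ n) = 0)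
    (I : ℤ → ℝ)
    (hI : ∀ n, I n = ζ (n + 1) * H n + ⟪q (n + 1), p n⟫
      + ∑ k ∈ Icc (a + 1) n, ζ k * (Λ k - (H k - H (k - 1)))) :
    ∀ n, a < n → I n - I (n - 1) = 0 := by
  intro n hn
  have hsum := sum_Icc_sub_sum_Icc_sub_one (fun k ↦ ζ k * (Λ k - (H k - H (k - 1))))
    (show a + 1 ≤ n by omega)
  have hpairing : ⟪q (n + 1), p n⟫ - ⟪q n, p (n - 1)⟫ = ⟪f n, q n⟫ + ⟪p n, q (n + 1) - q n⟫ := by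
    rw [← hEL, inner_sub_left, inner_sub_right, real_inner_comm (q (n + 1)),
      real_inner_comm (q n), real_inner_comm (q n)]
    ring
  rw [hI n, hI (n - 1), sub_add_cancel]
  linear_combination hsum + hpairing + hinv n

/-- Discrete second Euler–Lagrange / Noether identity (T = ℤ with time transformations). -/
theorem discrete_noether_with_time_change
    {d : ℕ} (L Lt : ℤ → EuclideanSpace ℝ (Fin d) → EuclideanSpace ℝ (Fin d) → ℝ)
    (Lx Lv : ℤ → EuclideanSpace ℝ (Fin d) → EuclideanSpace ℝ (Fin d) →
      EuclideanSpace ℝ (Fin d))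
    (ζ : ℤ → ℝ) (ξ : EuclideanSpace ℝ (Fin d) → EuclideanSpace ℝ (Fin d))
    (x : ℤ → EuclideanSpace ℝ (Fin d)) (a : ℤ)
    (hEL : ∀ n : ℤ,
      Lv n (x n) (x (n + 1) - x n) - Lv (n - 1) (x (n - 1)) (x n - x (n - 1))
        = Lx n (x n) (x (n + 1) - x n))
    (hinv : ∀ n : ℤ,
      Lt n (x n) (x (n + 1) - x n) * ζ n
        + (inner ℝ (Lx n (x n) (x (n + 1) - x n)) (ξ (x n)) : ℝ)
        + (inner ℝ (Lv n (x n) (x (n + 1) - x n)) (ξ (x (n + 1)) - ξ (x n)) : ℝ)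
        + (L n (x n) (x (n + 1) - x n)
            - (inner ℝ (Lv n (x n) (x (n + 1) - x n)) (x (n + 1) - x n) : ℝ))
          * (ζ (n + 1) - ζ n) = 0)
    (I : ℤ → ℝ)
    (hI : ∀ n : ℤ, I n =
      ζ (n + 1) * (L n (x n) (x (n + 1) - x n)
          - (inner ℝ (Lv n (x n) (x (n + 1) - x n)) (x (n + 1) - x n) : ℝ))
        + (inner ℝ (ξ (x (n + 1))) (Lv n (x n) (x (n + 1) - x n)) : ℝ)
        + ∑ k ∈ Finset.Icc (a + 1) n, ζ k *
            (Lt k (x k) (x (k + 1) - x k)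
              - ((L k (x k) (x (k + 1) - x k)
                    - (inner ℝ (Lv k (x k) (x (k + 1) - x k)) (x (k + 1) - x k) : ℝ))
                 - (L (k - 1) (x (k - 1)) (x k - x (k - 1))
                    - (inner ℝ (Lv (k - 1) (x (k - 1)) (x k - x (k - 1)))
                        (x k - x (k - 1)) : ℝ))))) :
    ∀ n : ℤ, a < n → I n - I (n - 1) = 0 :=
  noether_charge_sub_eq_zero
    (fun n ↦ L n (x n) (x (n + 1) - x n) - ⟪Lv n (x n) (x (n + 1) - x n), x (n + 1) - x n⟫)
    (fun n ↦ Lt n (x n) (x (n + 1) - x n)) ζ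
    (fun n ↦ Lv n (x n) (x (n + 1) - x n)) (fun n ↦ Lx n (x n) (x (n + 1) - x n))
    (fun n ↦ ξ (x n)) a
    (fun n ↦ by simpa only [sub_add_cancel] using hEL n) hinv I
    (fun n ↦ by simpa only [sub_add_cancel] using hI n)
end
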